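/- If φ: V → W is a proper causal relation, then for every subset ζ ⊆ V the Cauchy development satisfies D⁺(φ(ζ)) ⊆ φ(D⁺(ζ)), and likewise for D⁻. -/

import Mathlib

open Set

/-- A (time-oriented) Lorentzian manifold, modeled chart-free on a real normed space `E`:
a field of metric tensors `g` of signature (+,-,...,-) together with a field of future
cones `future`, satisfying the standard properties of the future causal cone. -/
structure LorentzStruct (E : Type*) [NormedAddCommGroup E] [NormedSpace ℝ E] where
  /-- the metric tensor at each point -/
  g : E → E →ₗ[ℝ] E →ₗ[ℝ] ℝ
  symm : ∀ x v w, g x v w = g x w v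
  /-- `future x v`: the tangent vector `v` at `x` is future pointing -/
  future : E → E → Prop
  future_smul : ∀ x v (c : ℝ), 0 < c → future x v → future x (c • v)
  future_add : ∀ x v w, future x v → future x w → future x (v + w)
  /-- two causal future-directed vectors have nonnegative inner product -/
  g_nonneg : ∀ x v w, future x v → future x w →
    0 ≤ g x v v → 0 ≤ g x w w → 0 ≤ g x v w

namespace LorentzStruct

variable {E F G : Type*} [NormedAddCommGroup E] [NormedSpace ℝ E]
  [NormedAddCommGroup F] [NormedSpace ℝ F] [NormedAddCommGroup G] [NormedSpace ℝ G]

/-- causal future-directed tangent vector at `x` -/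
def causalFD (L : LorentzStruct E) (x v : E) : Prop :=
  L.future x v ∧ 0 ≤ L.g x v v ∧ v ≠ 0

/-- timelike future-directed tangent vector at `x` -/
def timelikeFD (L : LorentzStruct E) (x v : E) : Prop :=
  L.future x v ∧ 0 < L.g x v v

/-- null future-directed tangent vector at `x` -/
def nullFD (L : LorentzStruct E) (x v : E) : Prop :=
  L.future x v ∧ L.g x v v = 0 ∧ v ≠ 0

/-- `φ` is a proper causal relation (`V ≺_φ W`): a differentiable map whose
pushforward (differential) maps every causal future-directed vector to a causal
future-directed vector. -/
def IsProperCausal (L : LorentzStruct E) (L' : LorentzStruct F) (φ : E → F) : Prop :=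
  Differentiable ℝ φ ∧
    ∀ x v, L.causalFD x v → L'.causalFD (φ x) (fderiv ℝ φ x v)

/-- the pullback `φ*g̃` of the metric of the target evaluated at `x` -/
noncomputable def pullback (L' : LorentzStruct F) (φ : E → F) (x v w : E) : ℝ :=
  L'.g (φ x) (fderiv ℝ φ x v) (fderiv ℝ φ x w)

/-- chronological relation `p ≪ q`: a future-directed timelike curve from `p` to `q` -/
def chron (L : LorentzStruct E) (p q : E) : Prop :=
  ∃ γ : ℝ → E, Differentiable ℝ γ ∧ γ 0 = p ∧ γ 1 = q ∧
    ∀ t ∈ Icc (0 : ℝ) 1, L.timelikeFD (γ t) (deriv γ t)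

/-- causal relation `p ≤ q`: `p = q` or a future-directed causal curve from `p` to `q` -/
def causalRel (L : LorentzStruct E) (p q : E) : Prop :=
  p = q ∨ ∃ γ : ℝ → E, Differentiable ℝ γ ∧ γ 0 = p ∧ γ 1 = q ∧
    ∀ t ∈ Icc (0 : ℝ) 1, L.causalFD (γ t) (deriv γ t)

/-- chronological future `I⁺(ζ)` -/
def chronFuture (L : LorentzStruct E) (ζ : Set E) : Set E :=
  {q | ∃ p ∈ ζ, L.chron p q}

/-- chronological past `I⁻(ζ)` -/
def chronPast (L : LorentzStruct E) (ζ : Set E) : Set E :=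
  {q | ∃ p ∈ ζ, L.chron q p}

/-- causal future `J⁺(ζ)` -/
def causalFuture (L : LorentzStruct E) (ζ : Set E) : Set E :=
  {q | ∃ p ∈ ζ, L.causalRel p q}

/-- causal past `J⁻(ζ)` -/
def causalPast (L : LorentzStruct E) (ζ : Set E) : Set E :=
  {q | ∃ p ∈ ζ, L.causalRel q p}

/-- a causal curve (future or past directed), parametrized by `ℝ` -/
def CausalCurve (L : LorentzStruct E) (γ : ℝ → E) : Prop :=
  Differentiable ℝ γ ∧
    ((∀ t, L.causalFD (γ t) (deriv γ t)) ∨ (∀ t, L.causalFD (γ t) (-deriv γ t)))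

/-- a distinguishing spacetime: every neighbourhood of every point `p` contains a
smaller neighbourhood of `p` meeting every causal curve through `p` in a connected set -/
def Distinguishing (L : LorentzStruct E) : Prop :=
  ∀ p : E, ∀ U ∈ nhds p, ∃ B ∈ nhds p, B ⊆ U ∧
    ∀ γ : ℝ → E, L.CausalCurve γ → (∃ t, γ t = p) →
      IsPreconnected (γ ⁻¹' B)

/-- future Cauchy development `D⁺(ζ)`: points `p` such that every past-inextendible
(causal future-directed, parametrized by all of `ℝ`) curve reaching `p` meets `ζ`
in the past of `p` -/
def futureCauchyDev (L : LorentzStruct E) (ζ : Set E) : Set E :=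
  {p | ∀ γ : ℝ → E, Differentiable ℝ γ → γ 0 = p →
    (∀ t, L.causalFD (γ t) (deriv γ t)) → ∃ t ≤ (0 : ℝ), γ t ∈ ζ}

/-- past Cauchy development `D⁻(ζ)` -/
def pastCauchyDev (L : LorentzStruct E) (ζ : Set E) : Set E :=
  {p | ∀ γ : ℝ → E, Differentiable ℝ γ → γ 0 = p →
    (∀ t, L.causalFD (γ t) (deriv γ t)) → ∃ t ≥ (0 : ℝ), γ t ∈ ζ}

/-- `Σ` is a Cauchy hypersurface: its total Cauchy development is everything -/
def IsCauchySurface (L : LorentzStruct E) (S : Set E) : Prop :=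
  L.futureCauchyDev S ∪ L.pastCauchyDev S = univ

/-- globally hyperbolic: admits a Cauchy hypersurface -/
def GloballyHyperbolic (L : LorentzStruct E) : Prop :=
  ∃ S : Set E, L.IsCauchySurface S

end LorentzStruct

open LorentzStruct

variable {E F : Type*} [NormedAddCommGroup E] [NormedSpace ℝ E]
  [NormedAddCommGroup F] [NormedSpace ℝ F]

namespace LorentzStruct.IsProperCausal

variable {L : LorentzStruct E} {L' : LorentzStruct F} {φ : E → F}

theorem causalFD_deriv_comp (hφ : IsProperCausal L L' φ) {γ : ℝ → E} {t : ℝ}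
    (hγ : DifferentiableAt ℝ γ t) (hcausal : L.causalFD (γ t) (deriv γ t)) :
    L'.causalFD (φ (γ t)) (deriv (φ ∘ γ) t) := by
  rw [((hφ.1 (γ t)).hasFDerivAt.comp_hasDerivAt t hγ.hasDerivAt).deriv]
  exact hφ.2 _ _ hcausal

theorem preimage_futureCauchyDev_subset (hφ : IsProperCausal L L' φ) (S : Set F) :
    φ ⁻¹' L'.futureCauchyDev S ⊆ L.futureCauchyDev (φ ⁻¹' S) :=
  fun _ hp γ hγ hγ0 hcausal =>
    hp (φ ∘ γ) (hφ.1.comp hγ) (by simp [hγ0]) fun t => hφ.causalFD_deriv_comp (hγ t) (hcausal t)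

theorem preimage_pastCauchyDev_subset (hφ : IsProperCausal L L' φ) (S : Set F) :
    φ ⁻¹' L'.pastCauchyDev S ⊆ L.pastCauchyDev (φ ⁻¹' S) :=
  fun _ hp γ hγ hγ0 hcausal =>
    hp (φ ∘ γ) (hφ.1.comp hγ) (by simp [hγ0]) fun t => hφ.causalFD_deriv_comp (hγ t) (hcausal t)

end LorentzStruct.IsProperCausal

/-- for a proper causal relation `φ` and any `ζ ⊆ V`,
`D⁺(φ(ζ)) ⊆ φ(D⁺(ζ))`, and likewise for `D⁻`. -/
theorem properCausal_cauchy_development (L : LorentzStruct E) (L' : LorentzStruct F)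
    (φ : E → F) (hbij : Function.Bijective φ) (hφ : IsProperCausal L L' φ)
    (ζ : Set E) :
    L'.futureCauchyDev (φ '' ζ) ⊆ φ '' (L.futureCauchyDev ζ) ∧
    L'.pastCauchyDev (φ '' ζ) ⊆ φ '' (L.pastCauchyDev ζ) := by
  simp only [← hbij.2.preimage_subset_preimage_iff, preimage_image_eq _ hbij.1]
  constructor
  · simpa only [preimage_image_eq _ hbij.1] using hφ.preimage_futureCauchyDev_subset (φ '' ζ)
  · simpa only [preimage_image_eq _ hbij.1] using hφ.preimage_pastCauchyDev_subset (φ '' ζ)
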